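/- arXiv:1607.05320 — 2 statements merged into one kernel-verified Lean document; each statement's English description precedes it below -/
import Mathlib

section
/- Piecewise F-syndeticity is partition regular: if F is a filter on a group G whose set of extending ultrafilters is closed under the ultrafilter product, A ⊆ G is piecewise F-syndetic, and A = A₁ ∪ ⋯ ∪ Aₙ is a finite partition, then some Aᵢ is piecewise F-syndetic. -/
/-- A filter on a set `G` in the sense of the paper. -/
def IsFilterOn {G : Type*} (F : Set (Set G)) : Prop :=
  ∅ ∉ F ∧ Set.univ ∈ F ∧ (∀ A B : Set G, A ∈ F → A ⊆ B → B ∈ F) ∧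
    (∀ A B : Set G, A ∈ F → B ∈ F → A ∩ B ∈ F)

/-- An ultrafilter: a filter such that for each set `A`, either `A` or its
complement belongs to the collection. -/
def IsUltraOn {G : Type*} (U : Set (Set G)) : Prop :=
  IsFilterOn U ∧ ∀ A : Set G, A ∈ U ∨ Aᶜ ∈ U

/-- The (ultra)filter product: `A ∈ F·G` iff `{x : {y : x·y ∈ A} ∈ G} ∈ F`. -/
def filterProd {G : Type*} [Mul G] (F₁ F₂ : Set (Set G)) : Set (Set G) :=
  {A | {x | {y | x * y ∈ A} ∈ F₂} ∈ F₁}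

/-- `T = closure of F` in `βG`: the set of all ultrafilters extending the filter `F`. -/
def extendingUltra {G : Type*} (F : Set (Set G)) : Set (Set (Set G)) :=
  {U | IsUltraOn U ∧ F ⊆ U}

/-- `I` is a (two-sided) ideal of the subsemigroup `T` of `βG`. -/
def IsIdealOf {G : Type*} [Mul G] (T I : Set (Set (Set G))) : Prop :=
  I.Nonempty ∧ I ⊆ T ∧
    ∀ p ∈ T, ∀ q ∈ I, filterProd p q ∈ I ∧ filterProd q p ∈ I

/-- `K` is the smallest two-sided ideal `K(T)` of `T`. -/
def IsSmallestIdealOf {G : Type*} [Mul G] (T K : Set (Set (Set G))) : Prop :=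
  IsIdealOf T K ∧ ∀ I, IsIdealOf T I → K ⊆ I

namespace IsFilterOn

variable {G : Type*} {F : Set (Set G)}

def toFilter (hF : IsFilterOn F) : Filter G where
  sets := F
  univ_sets := hF.2.1
  sets_of_superset := hF.2.2.1 _ _
  inter_sets := hF.2.2.2 _ _

end IsFilterOn

namespace IsUltraOn

variable {G : Type*} {U : Set (Set G)}

def toUltrafilter (hU : IsUltraOn U) : Ultrafilter G :=
  .ofComplNotMemIff hU.1.toFilter fun A => by
    refine ⟨fun hA => (hU.2 A).resolve_right hA, fun hA hAc => hU.1.1 ?_⟩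
    simpa using hU.1.2.2.2 _ _ hAc hA

@[simp]
theorem mem_toUltrafilter (hU : IsUltraOn U) {A : Set G} : A ∈ hU.toUltrafilter ↔ A ∈ U :=
  Iff.rfl

theorem exists_mem_of_iUnion_mem {ι : Type*} [Finite ι] (hU : IsUltraOn U) {As : ι → Set G}
    (h : (⋃ i, As i) ∈ U) : ∃ i, As i ∈ U := by
  rw [← hU.mem_toUltrafilter, ← Set.biUnion_univ,
    Ultrafilter.finite_biUnion_mem_iff Set.finite_univ] at h
  simpa using h

end IsUltraOn

theorem piecewise_syndetic_partition_regular_general {G : Type*} [Group G]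
    (F : Set (Set G))
    (K : Set (Set (Set G))) (hK : IsSmallestIdealOf (extendingUltra F) K)
    (A : Set G) (hA : ∃ p ∈ K, A ∈ p)
    (n : ℕ) (As : Fin n → Set G) (hpart : A = ⋃ i, As i) :
    ∃ i, ∃ p ∈ K, As i ∈ p := by
  obtain ⟨p, hpK, hAp⟩ := hA
  have hp : IsUltraOn p := (hK.1.2.1 hpK).1
  obtain ⟨i, hi⟩ := hp.exists_mem_of_iUnion_mem (hpart ▸ hAp)
  exact ⟨i, p, hpK, hi⟩

/-- Piecewise `F`-syndeticity (membership in some ultrafilter of the smallest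
ideal `K(T)` of the semigroup `T` of ultrafilters extending `F`) is partition
regular: if `A = A₁ ∪ ⋯ ∪ Aₙ` is piecewise `F`-syndetic then some `Aᵢ` is. -/
theorem piecewise_syndetic_partition_regular {G : Type*} [Group G]
    (F : Set (Set G)) (hF : IsFilterOn F)
    (hclosed : ∀ p q, p ∈ extendingUltra F → q ∈ extendingUltra F →
      filterProd p q ∈ extendingUltra F)
    (K : Set (Set (Set G))) (hK : IsSmallestIdealOf (extendingUltra F) K)
    (A : Set G) (hA : ∃ p ∈ K, A ∈ p)
    (n : ℕ) (As : Fin n → Set G) (hpart : A = ⋃ i, As i) :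
    ∃ i, ∃ p ∈ K, As i ∈ p :=
  piecewise_syndetic_partition_regular_general F K hK A hA n As hpart
end

section
/- Let k ≥ 1 and S(p) = p(x+1), R(p) = p + x^k on ℤ[x]. If w₁ and w₂ are words in two letters, each letter appearing at most k times in each word, and w₁(R,S) = w₂(R,S) as maps on ℤ[x], then w₁ = w₂ as abstract words. -/
/-!
If `w` contains `m` letters `S`, then `w(R, S) p = p(x + m) + ∑ᵢ gᵢ (x + i)^k`, where `gᵢ` counts
the letters `R` of `w` preceded by exactly `i` letters `S`. Applying `w(R, S)` to `x` and to `0`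
recovers `m` and the polynomial `∑ᵢ gᵢ (x + i)^k`. As `i ≤ m ≤ k`, the Vandermonde determinant
makes the `(x + i)^k`, `0 ≤ i ≤ k`, linearly independent, so the `gᵢ` are recovered too, and `m`
together with the `gᵢ` determines `w`.
-/

open Polynomial Finset

theorem linearIndependent_X_add_C_pow {R : Type*} [CommRing R] [IsDomain R] [CharZero R]
    {k : ℕ} {a : Fin (k + 1) → R} (ha : Function.Injective a) :
    LinearIndependent R fun i => (X + C (a i)) ^ k := by
  rw [Fintype.linearIndependent_iff]
  intro g hg
  -- The coefficient of `X ^ (k - e)` is `k.choose e * ∑ i, g i * a i ^ e`.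
  have hmoments : Matrix.vecMul g (Matrix.vandermonde a) = 0 := by
    funext e
    have he := congrArg (coeff · (k - e)) hg
    have hchoose : (k.choose (k - e) : R) ≠ 0 :=
      Nat.cast_ne_zero.mpr (Nat.choose_pos (Nat.sub_le k e)).ne'
    simp only [finsetSum_coeff, coeff_smul, coeff_X_add_C_pow, smul_eq_mul, coeff_zero,
      Nat.sub_sub_self e.is_le, ← mul_assoc, ← sum_mul, mul_eq_zero, hchoose, or_false] at he
    simpa [Matrix.vecMul, dotProduct, Matrix.vandermonde_apply] using he
  exact congrFun (Matrix.eq_zero_of_vecMul_eq_zero (Matrix.det_vandermonde_ne_zero_iff.mpr ha)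
    hmoments)

namespace WordEval

noncomputable def wordEval (R : Type*) [CommSemiring R] (k : ℕ) (w : List (Fin 2)) :
    R[X] → R[X] :=
  (w.map ![fun p : R[X] => p + X ^ k, fun p : R[X] => p.comp (X + 1)]).foldr (· ∘ ·) id

variable {R : Type*} [CommSemiring R] (k : ℕ)

@[simp]
theorem wordEval_nil (p : R[X]) : wordEval R k [] p = p := rfl

@[simp]
theorem wordEval_cons_zero (w : List (Fin 2)) (p : R[X]) :
    wordEval R k (0 :: w) p = wordEval R k w p + X ^ k := rfl

@[simp]
theorem wordEval_cons_one (w : List (Fin 2)) (p : R[X]) :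
    wordEval R k (1 :: w) p = (wordEval R k w p).comp (X + 1) := rfl

theorem wordEval_apply :
    ∀ (w : List (Fin 2)) (p : R[X]),
      wordEval R k w p = p.comp (X + C (w.count 1 : R)) + wordEval R k w 0
  | [], p => by simp
  | 0 :: w, p => by
    rw [wordEval_cons_zero, wordEval_cons_zero, wordEval_apply w p,
      List.count_cons_of_ne (by decide), add_assoc]
  | 1 :: w, p => by
    rw [wordEval_cons_one, wordEval_cons_one, wordEval_apply w p, List.count_cons_self]
    simp only [add_comp, comp_assoc, X_comp, C_comp, Nat.cast_succ, C_add, C_1, add_assoc,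
      add_comm (1 : R[X])]

/-- `w = 0 ^ gap w 0 1 0 ^ gap w 1 1 ⋯ 1 0 ^ gap w m` with `m = w.count 1`. -/
def gap : List (Fin 2) → ℕ → ℕ
  | [], _ => 0
  | 0 :: w, 0 => gap w 0 + 1
  | 0 :: w, i + 1 => gap w (i + 1)
  | 1 :: _, 0 => 0
  | 1 :: w, i + 1 => gap w i

theorem gap_eq_zero_of_count_lt : ∀ {w : List (Fin 2)} {i : ℕ}, w.count 1 < i → gap w i = 0
  | [], _, _ => rfl
  | _ :: _, 0, h => absurd h (Nat.not_lt_zero _)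
  | 0 :: w, i + 1, h => gap_eq_zero_of_count_lt (w := w) (by simpa using h)
  | 1 :: w, i + 1, h => gap_eq_zero_of_count_lt (w := w) (by simpa using h)

theorem eq_of_count_one_eq_of_gap_eq : ∀ {w₁ w₂ : List (Fin 2)},
    w₁.count 1 = w₂.count 1 → gap w₁ = gap w₂ → w₁ = w₂
  | [], [], _, _ => rfl
  | [], 0 :: _, _, h | 0 :: _, [], _, h => by simpa [gap] using congrFun h 0
  | 0 :: _, 1 :: _, _, h | 1 :: _, 0 :: _, _, h => by simpa [gap] using congrFun h 0
  | [], 1 :: _, hc, _ | 1 :: _, [], hc, _ => by simp at hc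
  | 0 :: w₁, 0 :: w₂, hc, h => by
    refine congrArg _ (eq_of_count_one_eq_of_gap_eq (by simpa using hc) (funext fun i => ?_))
    cases i with
    | zero => simpa [gap] using congrFun h 0
    | succ i => exact congrFun h (i + 1)
  | 1 :: w₁, 1 :: w₂, hc, h =>
    congrArg _ <|
      eq_of_count_one_eq_of_gap_eq (by simpa using hc) (funext fun i => congrFun h (i + 1))

theorem wordEval_zero_eq_sum :
    ∀ {w : List (Fin 2)} {n : ℕ}, w.count 1 < n →
      wordEval R k w 0 = ∑ i ∈ range n, gap w i • (X + C (i : R)) ^ k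
  | [], n, _ => by simp [gap]
  | _ :: _, 0, h => absurd h (Nat.not_lt_zero _)
  | 0 :: w, n + 1, h => by
    rw [wordEval_cons_zero, wordEval_zero_eq_sum (n := n + 1) (by simpa using h),
      sum_range_succ', sum_range_succ']
    simp only [gap, add_smul, one_smul, Nat.cast_zero, map_zero, add_zero, add_assoc]
  | 1 :: w, n + 1, h => by
    rw [wordEval_cons_one, wordEval_zero_eq_sum (n := n) (by simpa using h), Polynomial.sum_comp,
      sum_range_succ']
    simp only [gap, zero_smul, add_zero, smul_comp, pow_comp, add_comp, X_comp, C_comp,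
      Nat.cast_succ, C_add, C_1, add_assoc, add_comm (1 : R[X])]

end WordEval

open WordEval in
theorem word_eval_injective_general (k : ℕ) (w₁ w₂ : List (Fin 2))
    (h₁ : ∀ a : Fin 2, w₁.count a ≤ k) (h₂ : ∀ a : Fin 2, w₂.count a ≤ k)
    (heq :
      (w₁.map ![fun p : ℤ[X] => p + X ^ k,
                fun p : ℤ[X] => p.comp (X + 1)]).foldr (· ∘ ·) id =
      (w₂.map ![fun p : ℤ[X] => p + X ^ k,
                fun p : ℤ[X] => p.comp (X + 1)]).foldr (· ∘ ·) id) :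
    w₁ = w₂ := by
  have heq : wordEval ℤ k w₁ = wordEval ℤ k w₂ := heq
  have hzero : wordEval ℤ k w₁ 0 = wordEval ℤ k w₂ 0 := congrFun heq 0
  have hcount : w₁.count 1 = w₂.count 1 := by
    have hX := congrFun heq X
    rwa [wordEval_apply, wordEval_apply k w₂, hzero, X_comp, X_comp, add_left_inj,
      add_right_inj, C_inj, Nat.cast_inj] at hX
  refine eq_of_count_one_eq_of_gap_eq hcount (funext fun i => ?_)
  rcases lt_or_ge k i with hki | hik
  · rw [gap_eq_zero_of_count_lt ((h₁ 1).trans_lt hki),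
      gap_eq_zero_of_count_lt ((h₂ 1).trans_lt hki)]
  · have hsum : ∑ j : Fin (k + 1), gap w₁ j • (X + C ((j : ℕ) : ℤ)) ^ k =
        ∑ j : Fin (k + 1), gap w₂ j • (X + C ((j : ℕ) : ℤ)) ^ k := by
      rw [Fin.sum_univ_eq_sum_range (fun j => gap w₁ j • (X + C (j : ℤ)) ^ k),
        Fin.sum_univ_eq_sum_range (fun j => gap w₂ j • (X + C (j : ℤ)) ^ k),
        ← wordEval_zero_eq_sum k (Nat.lt_succ_of_le (h₁ 1)),
        ← wordEval_zero_eq_sum k (Nat.lt_succ_of_le (h₂ 1)), hzero]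
    have hind := (linearIndependent_X_add_C_pow (k := k) (a := fun j => ((j : ℕ) : ℤ))
      (Nat.cast_injective.comp Fin.val_injective)).restrict_scalars' ℕ
    exact Fintype.linearIndependent_iffₛ.mp hind _ _ hsum ⟨i, Nat.lt_succ_of_le hik⟩

/-- Let `S(p) = p(x+1)` and `R(p) = p + x^k` on `ℤ[x]`.  If `w₁, w₂` are words
in two letters (letter `0` standing for `R`, letter `1` for `S`), each letter
appearing at most `k` times in each word, and the compositions `w₁(R,S)` and
`w₂(R,S)` are equal as maps `ℤ[x] → ℤ[x]`, then `w₁ = w₂` as abstract words. -/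
theorem word_eval_injective (k : ℕ) (hk : 1 ≤ k) (w₁ w₂ : List (Fin 2))
    (h₁ : ∀ a : Fin 2, w₁.count a ≤ k) (h₂ : ∀ a : Fin 2, w₂.count a ≤ k)
    (heq :
      (w₁.map ![fun p : ℤ[X] => p + X ^ k,
                fun p : ℤ[X] => p.comp (X + 1)]).foldr (· ∘ ·) id =
      (w₂.map ![fun p : ℤ[X] => p + X ^ k,
                fun p : ℤ[X] => p.comp (X + 1)]).foldr (· ∘ ·) id) :
    w₁ = w₂ :=
  word_eval_injective_general k w₁ w₂ h₁ h₂ heq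
end
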